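/- arXiv:1008.4164 — 10 statements merged into one kernel-verified Lean document; each statement's English description precedes it below -/
import Mathlib

section
/- A nonzero module M over a ring R is coprime (i.e. for every two-sided ideal I of R, IM = M or IM = 0) if and only if for every proper submodule L of M, the annihilator of M/L equals the annihilator of M. -/
section Prelim

variable {R : Type*} [Ring R] {M : Type*} [AddCommGroup M] [Module R M]

/-- A left ideal of `R` is two-sided. -/
def IsTwoSidedIdeal (I : Ideal R) : Prop := ∀ r ∈ I, ∀ s : R, r * s ∈ I

/-- `M` is a coprime module: `IM = M` or `IM = 0` for every two-sided ideal `I`. -/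
def IsCoprimeModule (R M : Type*) [Ring R] [AddCommGroup M] [Module R M] : Prop :=
  ∀ I : Ideal R, IsTwoSidedIdeal I →
    I • (⊤ : Submodule R M) = ⊤ ∨ I • (⊤ : Submodule R M) = ⊥

/-- A proper submodule `K ⊊ M` is a coprime submodule of `M`:
`IM + K = M` or `IM ⊆ K` for every two-sided ideal `I`. -/
def IsCoprimeSubmodule (K : Submodule R M) : Prop :=
  K ≠ ⊤ ∧ ∀ I : Ideal R, IsTwoSidedIdeal I →
    I • (⊤ : Submodule R M) ⊔ K = ⊤ ∨ I • (⊤ : Submodule R M) ≤ K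

/-- A nonzero submodule `K ≤ M` is second: `IK = K` or `IK = 0`
for every two-sided ideal `I`. -/
def IsSecondSubmodule (K : Submodule R M) : Prop :=
  K ≠ ⊥ ∧ ∀ I : Ideal R, IsTwoSidedIdeal I → I • K = K ∨ I • K = ⊥

/-- The ideal `(K :_R M) = {r | r • M ⊆ K}`. -/
def colonIdeal (K : Submodule R M) : Ideal R where
  carrier := {r : R | ∀ m : M, r • m ∈ K}
  zero_mem' := by intro m; rw [zero_smul]; exact K.zero_mem
  add_mem' := by intro a b ha hb m; rw [add_smul]; exact K.add_mem (ha m) (hb m)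
  smul_mem' := by intro s r hr m; rw [smul_eq_mul, mul_smul]; exact K.smul_mem s (hr m)

/-- The annihilator `(0 :_M I)` of a two-sided ideal `I` in `M`. -/
def annSubmodule (I : Ideal R) (hI : IsTwoSidedIdeal I) : Submodule R M where
  carrier := {m : M | ∀ r ∈ I, r • m = 0}
  zero_mem' := by intro r _; exact smul_zero r
  add_mem' := by intro a b ha hb r hr; rw [smul_add, ha r hr, hb r hr, add_zero]
  smul_mem' := by intro s m hm r hr; rw [← mul_smul]; exact hm _ (hI r hr s)

/-- A nonzero submodule `K` is strongly hollow in `M`. -/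
def StronglyHollowIn (K : Submodule R M) : Prop :=
  K ≠ ⊥ ∧ ∀ L₁ L₂ : Submodule R M, K ≤ L₁ ⊔ L₂ → K ≤ L₁ ∨ K ≤ L₂

/-- A proper submodule `K` is strongly irreducible in `M`. -/
def StronglyIrreducibleIn (K : Submodule R M) : Prop :=
  K ≠ ⊤ ∧ ∀ L₁ L₂ : Submodule R M, L₁ ⊓ L₂ ≤ K → L₁ ≤ K ∨ L₂ ≤ K

/-- `V^s(L)`: the second submodules of `M` contained in `L`. -/
def secondVariety (L : Submodule R M) : Set (Submodule R M) :=
  {K | IsSecondSubmodule K ∧ K ≤ L}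

/-- `V^c(L)`: the coprime submodules of `M` containing `L`. -/
def coprimeVariety (L : Submodule R M) : Set (Submodule R M) :=
  {K | IsCoprimeSubmodule K ∧ L ≤ K}

lemma IsTwoSidedIdeal.inf {I J : Ideal R} (hI : IsTwoSidedIdeal I)
    (hJ : IsTwoSidedIdeal J) : IsTwoSidedIdeal (I ⊓ J) := by
  intro r hr s
  rw [Submodule.mem_inf] at hr ⊢
  exact ⟨hI r hr.1 s, hJ r hr.2 s⟩

lemma IsTwoSidedIdeal.mul {I J : Ideal R} (hJ : IsTwoSidedIdeal J) :
    IsTwoSidedIdeal (I * J) := by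
  intro r hr s
  refine Submodule.smul_induction_on hr ?_ ?_
  · intro a ha b hb
    rw [smul_eq_mul, mul_assoc]
    exact Ideal.mul_mem_mul ha (hJ b hb s)
  · intro x y hx hy
    rw [add_mul]
    exact Ideal.add_mem _ hx hy

end Prelim

section ColonIdeal

variable {R M : Type*} [Ring R] [AddCommGroup M] [Module R M]

lemma colonIdeal_isTwoSided (L : Submodule R M) : IsTwoSidedIdeal (colonIdeal L) := by
  intro r hr s m
  rw [mul_smul]
  exact hr (s • m)

lemma smul_top_le_iff_le_colonIdeal {I : Ideal R} {L : Submodule R M} :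
    I • (⊤ : Submodule R M) ≤ L ↔ I ≤ colonIdeal L := by
  rw [Submodule.smul_le]
  exact ⟨fun h r hr m => h r hr m trivial, fun h r hr m _ => h hr m⟩

lemma colonIdeal_mono {L L' : Submodule R M} (h : L ≤ L') : colonIdeal L ≤ colonIdeal L' :=
  fun _ hr m => h (hr m)

lemma colonIdeal_bot : colonIdeal (⊥ : Submodule R M) = Module.annihilator R M := by
  ext r
  rw [Module.mem_annihilator]
  exact forall_congr' fun _ => Submodule.mem_bot R

lemma smul_top_eq_bot_iff_le_annihilator {I : Ideal R} :
    I • (⊤ : Submodule R M) = ⊥ ↔ I ≤ Module.annihilator R M := by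
  rw [← le_bot_iff, smul_top_le_iff_le_colonIdeal, colonIdeal_bot]

lemma annihilator_le_colonIdeal (L : Submodule R M) : Module.annihilator R M ≤ colonIdeal L :=
  colonIdeal_bot (R := R) (M := M) ▸ colonIdeal_mono bot_le

end ColonIdeal

theorem statement0_general {R M : Type*} [Ring R] [AddCommGroup M] [Module R M] :
    IsCoprimeModule R M ↔
      ∀ L : Submodule R M, L ≠ ⊤ → colonIdeal L = Module.annihilator R M := by
  constructor
  · intro hcoprime L hL
    refine le_antisymm ?_ (annihilator_le_colonIdeal L)
    have hle : colonIdeal L • (⊤ : Submodule R M) ≤ L :=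
      smul_top_le_iff_le_colonIdeal.mpr le_rfl
    rcases hcoprime _ (colonIdeal_isTwoSided L) with htop | hbot
    · exact absurd (top_le_iff.mp (htop ▸ hle)) hL
    · exact smul_top_eq_bot_iff_le_annihilator.mp hbot
  · intro hcolon I _
    by_cases htop : I • (⊤ : Submodule R M) = ⊤
    · exact Or.inl htop
    · right
      rw [smul_top_eq_bot_iff_le_annihilator, ← hcolon _ htop]
      exact smul_top_le_iff_le_colonIdeal.mp le_rfl

/-- A nonzero module `M` is coprime iff for every proper submodule `L`,
the annihilator of `M/L` (i.e. `(L :_R M)`) equals the annihilator of `M`. -/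
theorem statement0 {R M : Type*} [Ring R] [AddCommGroup M] [Module R M] [Nontrivial M] :
    IsCoprimeModule R M ↔
      ∀ L : Submodule R M, L ≠ ⊤ → colonIdeal L = Module.annihilator R M :=
  statement0_general
end

section
/- If K is a coprime submodule of M and L is a proper nonzero submodule of M, then either K ∩ L is a coprime submodule of L, or (K + L)/L is a coprime submodule of M/L. -/
section Coprime

variable {R : Type*} [Ring R] {M : Type*} [AddCommGroup M] [Module R M]
  {M' : Type*} [AddCommGroup M'] [Module R M']

lemma Submodule.map_subtype_smul_top (I : Ideal R) (L : Submodule R M) :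
    (I • (⊤ : Submodule R L)).map L.subtype = I • L := by
  rw [Submodule.map_smul'', Submodule.map_top, Submodule.range_subtype]

lemma IsCoprimeSubmodule.mono {K N : Submodule R M} (hK : IsCoprimeSubmodule K)
    (hKN : K ≤ N) (hN : N ≠ ⊤) : IsCoprimeSubmodule N := by
  refine ⟨hN, fun I hI => ?_⟩
  rcases hK.2 I hI with h | h
  · exact Or.inl (top_le_iff.mp (h.symm.le.trans (sup_le_sup_left hKN _)))
  · exact Or.inr (h.trans hKN)

lemma IsCoprimeSubmodule.map_of_surjective {N : Submodule R M} (hN : IsCoprimeSubmodule N)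
    {f : M →ₗ[R] M'} (hf : Function.Surjective f) (hker : LinearMap.ker f ≤ N) :
    IsCoprimeSubmodule (N.map f) := by
  have hsmul (I : Ideal R) : I • (⊤ : Submodule R M') = (I • ⊤ : Submodule R M).map f := by
    rw [Submodule.map_smul'', Submodule.map_top, LinearMap.range_eq_top.mpr hf]
  refine ⟨fun h => hN.1 ?_, fun I hI => ?_⟩
  · rw [← sup_eq_left.mpr hker, ← Submodule.comap_map_eq, h, Submodule.comap_top]
  rw [hsmul]
  rcases hN.2 I hI with h | h
  · left
    rw [← Submodule.map_sup, h, Submodule.map_top, LinearMap.range_eq_top.mpr hf]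
  · exact Or.inr (Submodule.map_mono h)

lemma IsCoprimeSubmodule.comap_subtype_of_sup_eq_top {K : Submodule R M}
    (hK : IsCoprimeSubmodule K) {L : Submodule R M} (hKL : K ⊔ L = ⊤) :
    IsCoprimeSubmodule (K.comap L.subtype) := by
  refine ⟨fun h => hK.1 ?_, fun I hI => ?_⟩
  · rwa [sup_eq_left.mpr (Submodule.comap_subtype_eq_top.mp h)] at hKL
  rcases hK.2 I hI with h | h
  · left
    have hIL : I • L ⊔ K = ⊤ := by
      refine top_le_iff.mp (h ▸ sup_le ?_ le_sup_right)
      rw [← hKL, Submodule.smul_sup]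
      exact sup_le (Submodule.smul_le_right.trans le_sup_right) le_sup_left
    apply Submodule.map_injective_of_injective L.injective_subtype
    rw [Submodule.map_sup, Submodule.map_subtype_smul_top, Submodule.map_comap_subtype,
      Submodule.map_top, Submodule.range_subtype, inf_comm,
      ← sup_inf_assoc_of_le K Submodule.smul_le_right, hIL, top_inf_eq]
  · right
    rw [← Submodule.map_le_iff_le_comap, Submodule.map_subtype_smul_top]
    exact (Submodule.smul_mono le_rfl le_top).trans h

end Coprime

theorem statement2_general {R M : Type*} [Ring R] [AddCommGroup M] [Module R M]
    (K L : Submodule R M) (hK : IsCoprimeSubmodule K) :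
    IsCoprimeSubmodule ((K ⊓ L).comap L.subtype) ∨
      IsCoprimeSubmodule ((K ⊔ L).map L.mkQ) := by
  by_cases hKL : K ⊔ L = ⊤
  · left
    rw [Submodule.comap_inf, Submodule.comap_subtype_self, inf_top_eq]
    exact hK.comap_subtype_of_sup_eq_top hKL
  · right
    exact (hK.mono le_sup_left hKL).map_of_surjective L.mkQ_surjective
      (by rw [Submodule.ker_mkQ]; exact le_sup_right)

/-- If `K` is a coprime submodule of `M` and `L` is a proper nonzero
submodule of `M`, then `K ⊓ L` is a coprime submodule of `L` or `(K + L)/L` is a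
coprime submodule of `M/L`. -/
theorem statement2 {R M : Type*} [Ring R] [AddCommGroup M] [Module R M]
    (K L : Submodule R M) (hK : IsCoprimeSubmodule K) (hL0 : L ≠ ⊥) (hL : L ≠ ⊤) :
    IsCoprimeSubmodule ((K ⊓ L).comap L.subtype) ∨
      IsCoprimeSubmodule ((K ⊔ L).map L.mkQ) :=
  statement2_general K L hK
end

section
/- If M is a completely coprime R-module (for every r ∈ R, rM = M or rM = 0), then the annihilator of M is a completely prime ideal (for all a, b ∈ R, ab ∈ ann(M) implies a ∈ ann(M) or b ∈ ann(M)). -/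
theorem smul_eq_zero_of_mul_smul_eq_zero_of_surjective {R M : Type*} [Monoid R] [Zero M]
    [MulAction R M] {a b : R} (hb : Function.Surjective (b • · : M → M))
    (hab : ∀ m : M, (a * b) • m = 0) (m : M) : a • m = 0 := by
  obtain ⟨m', rfl⟩ := hb m
  rw [← mul_smul]
  exact hab m'

theorem statement4_general {R M : Type*} [Ring R] [AddCommGroup M] [Module R M]
    (h : ∀ r : R, (∀ m : M, ∃ m' : M, r • m' = m) ∨ (∀ m : M, r • m = 0)) :
    ∀ a b : R, (∀ m : M, (a * b) • m = 0) →
      (∀ m : M, a • m = 0) ∨ (∀ m : M, b • m = 0) := by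
  intro a b hab
  exact (h b).imp (fun hb => smul_eq_zero_of_mul_smul_eq_zero_of_surjective hb hab) id

/-- If `M` is completely coprime (for every `r : R`, `rM = M` or `rM = 0`),
then `ann_R(M)` is completely prime: `ab ∈ ann(M)` implies `a ∈ ann(M)` or `b ∈ ann(M)`. -/
theorem statement4 {R M : Type*} [Ring R] [AddCommGroup M] [Module R M] [Nontrivial M]
    (h : ∀ r : R, (∀ m : M, ∃ m' : M, r • m' = m) ∨ (∀ m : M, r • m = 0)) :
    ∀ a b : R, (∀ m : M, (a * b) • m = 0) →
      (∀ m : M, a • m = 0) ∨ (∀ m : M, b • m = 0) :=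
  statement4_general h
end

section
/- A proper submodule K of M is completely coprime in M if and only if q := (K :_R M) is a completely prime ideal and M/K is a divisible R/q-module. -/
section ColonIdeal

variable {R : Type*} [Ring R] {M : Type*} [AddCommGroup M] [Module R M] {K : Submodule R M}

lemma colonIdeal_ne_top (hK : K ≠ ⊤) : colonIdeal K ≠ ⊤ := by
  rw [Ne, Ideal.eq_top_iff_one]
  intro h
  exact hK (eq_top_iff.2 fun m _ => by simpa using h m)

lemma mem_colonIdeal_of_mul_mem {a b : R} (hb : ∀ m : M, ∃ m' : M, m - b • m' ∈ K)
    (hab : a * b ∈ colonIdeal K) : a ∈ colonIdeal K := by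
  intro m
  obtain ⟨m', hm'⟩ := hb m
  have hsplit : a • m = a • (m - b • m') + (a * b) • m' := by
    rw [smul_sub, mul_smul, sub_add_cancel]
  rw [hsplit]
  exact K.add_mem (K.smul_mem a hm') (hab m')

end ColonIdeal

/-- A proper submodule `K ⊊ M` is completely coprime in `M` iff
`q := (K :_R M)` is a completely prime ideal and `M/K` is a divisible `R/q`-module
(i.e. `rM + K = M` for every `r ∉ q`). -/
theorem statement8 {R M : Type*} [Ring R] [AddCommGroup M] [Module R M]
    (K : Submodule R M) (hK : K ≠ ⊤) :
    (∀ r : R, (∀ m : M, ∃ m' : M, m - r • m' ∈ K) ∨ (∀ m : M, r • m ∈ K)) ↔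
      ((colonIdeal K ≠ ⊤ ∧
        ∀ a b : R, a * b ∈ colonIdeal K → a ∈ colonIdeal K ∨ b ∈ colonIdeal K) ∧
        ∀ r : R, r ∉ colonIdeal K → ∀ m : M, ∃ m' : M, m - r • m' ∈ K) := by
  constructor
  · intro H
    refine ⟨⟨colonIdeal_ne_top hK, fun a b hab => ?_⟩, fun r hr => (H r).resolve_right hr⟩
    exact (H b).imp (fun hb => mem_colonIdeal_of_mul_mem hb hab) id
  · rintro ⟨-, hdiv⟩ r
    exact or_iff_not_imp_right.2 (hdiv r)
end

section
/- If K ⊊ M is a proper submodule with (K :_R M) a maximal left ideal that is two-sided, then K is completely coprime in M. -/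
/-!
Since `(K :_R M)` is two-sided, `R ⧸ (K :_R M)` is a ring, and it is a division ring because the
ideal is maximal as a left ideal. So an `r ∉ (K :_R M)` has a right inverse `s` modulo `(K :_R M)`,
and then every `m` equals `r • (s • m)` modulo `K`.
-/

section

variable {R : Type*} [Ring R]

theorem IsTwoSidedIdeal.isTwoSided {I : Ideal R} (hI : IsTwoSidedIdeal I) : I.IsTwoSided :=
  ⟨fun s hr => hI _ hr s⟩

theorem IsTwoSidedIdeal.exists_mul_sub_one_mem {I : Ideal R} (hI : IsTwoSidedIdeal I)
    [I.IsMaximal] {x : R} (hx : x ∉ I) : ∃ y, x * y - 1 ∈ I := by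
  have := hI.isTwoSided
  obtain ⟨b, hb⟩ := Ideal.Quotient.exists_inv (I := I) (a := Ideal.Quotient.mk I x)
    (mt Ideal.Quotient.eq_zero_iff_mem.mp hx)
  obtain ⟨y, rfl⟩ := Ideal.Quotient.mk_surjective b
  exact ⟨y, Ideal.Quotient.eq.mp (by rwa [map_mul, map_one])⟩

theorem sub_smul_smul_mem_of_mul_sub_one_mem_colonIdeal {M : Type*} [AddCommGroup M]
    [Module R M] {K : Submodule R M} {r s : R} (h : r * s - 1 ∈ colonIdeal K) (m : M) :
    m - r • s • m ∈ K := by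
  have hm : m - r • s • m = -((r * s - 1) • m) := by
    rw [sub_smul, one_smul, mul_smul, neg_sub]
  exact hm ▸ K.neg_mem (h m)

end

theorem statement9_general {R M : Type*} [Ring R] [AddCommGroup M] [Module R M]
    (K : Submodule R M)
    (hmax : (colonIdeal K).IsMaximal) (hts : IsTwoSidedIdeal (colonIdeal K)) :
    ∀ r : R, (∀ m : M, ∃ m' : M, m - r • m' ∈ K) ∨ (∀ m : M, r • m ∈ K) := by
  intro r
  by_cases hr : r ∈ colonIdeal K
  · exact Or.inr hr
  · obtain ⟨s, hs⟩ := hts.exists_mul_sub_one_mem hr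
    exact Or.inl fun m => ⟨s • m, sub_smul_smul_mem_of_mul_sub_one_mem_colonIdeal hs m⟩

/-- If `K ⊊ M` is a proper submodule with `(K :_R M)` a maximal left
ideal that is two-sided, then `K` is completely coprime in `M`:
for every `r : R`, `rM + K = M` or `rM ⊆ K`. -/
theorem statement9 {R M : Type*} [Ring R] [AddCommGroup M] [Module R M]
    (K : Submodule R M) (hK : K ≠ ⊤)
    (hmax : (colonIdeal K).IsMaximal) (hts : IsTwoSidedIdeal (colonIdeal K)) :
    ∀ r : R, (∀ m : M, ∃ m' : M, m - r • m' ∈ K) ∨ (∀ m : M, r • m ∈ K) :=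
  statement9_general K hmax hts
end

section
/- For submodules defined by annihilators: for any two ideals I, Ĩ of R, the set of second submodules contained in (0:_M I) + (0:_M Ĩ) equals the union of the second submodules contained in (0:_M I) and those contained in (0:_M Ĩ); moreover both equal the set of second submodules contained in (0:_M I·Ĩ). -/
/-!
The inclusions `(0:I) + (0:J) ≤ (0:I ⊓ J) ≤ (0:IJ)` give the chain
`V(0:I) ∪ V(0:J) ⊆ V((0:I) + (0:J)) ⊆ V(0:I ⊓ J) ⊆ V(0:IJ)`. It closes into a cycle because a
second submodule `K` with `I • J • K = 0` has `J • K = K`, hence `I • K = 0`, or `J • K = 0`.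
-/

section SecondVariety

variable {R M : Type*} [Ring R] [AddCommGroup M] [Module R M]

lemma le_annSubmodule_iff {I : Ideal R} (hI : IsTwoSidedIdeal I) {K : Submodule R M} :
    K ≤ annSubmodule I hI ↔ I • K = ⊥ := by
  refine ⟨fun h => le_bot_iff.1 (Submodule.smul_le.2 fun r hr m hm => ?_), fun h m hm r hr => ?_⟩
  · simpa using h hm r hr
  · simpa [h] using Submodule.smul_mem_smul (M := M) hr hm

lemma annSubmodule_anti {I J : Ideal R} (hI : IsTwoSidedIdeal I) (hJ : IsTwoSidedIdeal J)
    (h : I ≤ J) : (annSubmodule J hJ : Submodule R M) ≤ annSubmodule I hI :=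
  fun _ hm r hr => hm r (h hr)

lemma IsTwoSidedIdeal.mul_le_inf {I J : Ideal R} (hI : IsTwoSidedIdeal I) : I * J ≤ I ⊓ J :=
  le_inf (Ideal.mul_le.2 fun r hr s _ => hI r hr s) Ideal.mul_le_right

lemma IsSecondSubmodule.le_annSubmodule_or_of_le_annSubmodule_mul {K : Submodule R M}
    (hK : IsSecondSubmodule K) {I J : Ideal R} (hI : IsTwoSidedIdeal I) (hJ : IsTwoSidedIdeal J)
    (h : K ≤ annSubmodule (I * J) hJ.mul) : K ≤ annSubmodule I hI ∨ K ≤ annSubmodule J hJ := by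
  rw [le_annSubmodule_iff, Submodule.mul_smul] at h
  rw [le_annSubmodule_iff, le_annSubmodule_iff]
  rcases hK.2 J hJ with hJK | hJK
  · exact Or.inl (hJK ▸ h)
  · exact Or.inr hJK

lemma secondVariety_mono {L L' : Submodule R M} (h : L ≤ L') :
    secondVariety L ⊆ secondVariety L' :=
  fun _ ⟨hK, hKL⟩ => ⟨hK, hKL.trans h⟩

lemma union_secondVariety_subset_sup (L L' : Submodule R M) :
    secondVariety L ∪ secondVariety L' ⊆ secondVariety (L ⊔ L') :=
  Set.union_subset (secondVariety_mono le_sup_left) (secondVariety_mono le_sup_right)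

lemma secondVariety_annSubmodule_mul_subset {I J : Ideal R} (hI : IsTwoSidedIdeal I)
    (hJ : IsTwoSidedIdeal J) :
    secondVariety (annSubmodule (I * J) hJ.mul : Submodule R M) ⊆
      secondVariety (annSubmodule I hI) ∪ secondVariety (annSubmodule J hJ) := by
  rintro K ⟨hK, hKIJ⟩
  exact (hK.le_annSubmodule_or_of_le_annSubmodule_mul hI hJ hKIJ).imp (⟨hK, ·⟩) (⟨hK, ·⟩)

end SecondVariety

/-- For two-sided ideals `I, Ĩ` of `R`:
`V^s((0:_M I)) ∪ V^s((0:_M Ĩ)) = V^s((0:_M I) + (0:_M Ĩ)) = V^s((0:_M I ∩ Ĩ)) = V^s((0:_M I·Ĩ))`. -/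
theorem statement12 {R M : Type*} [Ring R] [AddCommGroup M] [Module R M]
    (I J : Ideal R) (hI : IsTwoSidedIdeal I) (hJ : IsTwoSidedIdeal J) :
    secondVariety ((annSubmodule I hI : Submodule R M) ⊔ annSubmodule J hJ) =
        secondVariety (annSubmodule I hI : Submodule R M) ∪
          secondVariety (annSubmodule J hJ : Submodule R M) ∧
      secondVariety ((annSubmodule I hI : Submodule R M) ⊔ annSubmodule J hJ) =
        secondVariety (annSubmodule (I ⊓ J) (hI.inf hJ) : Submodule R M) ∧
      secondVariety ((annSubmodule I hI : Submodule R M) ⊔ annSubmodule J hJ) =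
        secondVariety (annSubmodule (I * J) (IsTwoSidedIdeal.mul hJ) : Submodule R M) := by
  have h₁ := union_secondVariety_subset_sup (annSubmodule I hI : Submodule R M) (annSubmodule J hJ)
  have h₂ : secondVariety ((annSubmodule I hI : Submodule R M) ⊔ annSubmodule J hJ) ⊆
      secondVariety (annSubmodule (I ⊓ J) (hI.inf hJ)) :=
    secondVariety_mono (sup_le (annSubmodule_anti _ _ inf_le_left)
      (annSubmodule_anti _ _ inf_le_right))
  have h₃ : secondVariety (annSubmodule (I ⊓ J) (hI.inf hJ) : Submodule R M) ⊆
      secondVariety (annSubmodule (I * J) hJ.mul) :=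
    secondVariety_mono (annSubmodule_anti _ _ hI.mul_le_inf)
  have h₄ := secondVariety_annSubmodule_mul_subset (M := M) hI hJ
  exact ⟨(h₂.trans h₃ |>.trans h₄).antisymm h₁, h₂.antisymm (h₃.trans h₄ |>.trans h₁),
    (h₂.trans h₃).antisymm (h₄.trans h₁)⟩
end

section
/- If every second submodule of M is strongly hollow, then for all submodules L₁, L₂ of M, V^s(L₁ + L₂) = V^s(L₁) ∪ V^s(L₂); consequently the sets V^s(L) form the closed sets of a topology on Spec^s(M). -/
section

variable {R M : Type*} [Ring R] [AddCommGroup M] [Module R M]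

theorem StronglyHollowIn.le_sup_iff {K : Submodule R M} (hK : StronglyHollowIn K)
    {L₁ L₂ : Submodule R M} : K ≤ L₁ ⊔ L₂ ↔ K ≤ L₁ ∨ K ≤ L₂ :=
  ⟨hK.2 L₁ L₂, fun h => h.elim (le_sup_of_le_left ·) (le_sup_of_le_right ·)⟩

theorem secondVariety_sup (hsh : ∀ K : Submodule R M, IsSecondSubmodule K → StronglyHollowIn K)
    (L₁ L₂ : Submodule R M) :
    secondVariety (L₁ ⊔ L₂) = secondVariety L₁ ∪ secondVariety L₂ := by
  ext K
  simp only [secondVariety, Set.mem_union, Set.mem_ofPred_eq]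
  constructor
  · rintro ⟨hK, hle⟩
    exact ((hsh K hK).le_sup_iff.mp hle).imp (⟨hK, ·⟩) (⟨hK, ·⟩)
  · rintro (⟨hK, hle⟩ | ⟨hK, hle⟩)
    exacts [⟨hK, le_sup_of_le_left hle⟩, ⟨hK, le_sup_of_le_right hle⟩]

namespace SecondSpectrum

/-- `V^s(L)`, viewed inside `Spec^s(M)`. -/
def variety (L : Submodule R M) : Set {K : Submodule R M // IsSecondSubmodule K} :=
  {K | K.1 ≤ L}

theorem variety_bot : variety (⊥ : Submodule R M) = ∅ :=
  Set.eq_empty_of_forall_notMem fun K hK => K.2.1 (le_bot_iff.mp hK)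

theorem variety_iInf {ι : Sort*} (L : ι → Submodule R M) :
    variety (⨅ i, L i) = ⋂ i, variety (L i) := by
  ext K
  simp only [variety, Set.mem_ofPred_eq, Set.mem_iInter, le_iInf_iff]

theorem variety_sup (hsh : ∀ K : Submodule R M, IsSecondSubmodule K → StronglyHollowIn K)
    (L₁ L₂ : Submodule R M) : variety (L₁ ⊔ L₂) = variety L₁ ∪ variety L₂ := by
  ext K
  exact (hsh K.1 K.2).le_sup_iff

abbrev zariskiTopology (hsh : ∀ K : Submodule R M, IsSecondSubmodule K → StronglyHollowIn K) :
    TopologicalSpace {K : Submodule R M // IsSecondSubmodule K} :=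
  TopologicalSpace.ofClosed (Set.range variety) ⟨⊥, variety_bot⟩
    (fun A hA => by
      choose L hL using fun Z : A => hA Z.2
      refine ⟨⨅ Z, L Z, ?_⟩
      rw [variety_iInf, Set.sInter_eq_iInter]
      simp only [hL])
    (by
      rintro _ ⟨L₁, rfl⟩ _ ⟨L₂, rfl⟩
      exact ⟨L₁ ⊔ L₂, variety_sup hsh L₁ L₂⟩)

theorem isClosed_zariskiTopology_iff
    (hsh : ∀ K : Submodule R M, IsSecondSubmodule K → StronglyHollowIn K)
    (A : Set {K : Submodule R M // IsSecondSubmodule K}) :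
    @IsClosed _ (zariskiTopology hsh) A ↔ ∃ L : Submodule R M, A = variety L := by
  rw [← @isOpen_compl_iff _ _ (zariskiTopology hsh)]
  show Aᶜᶜ ∈ Set.range variety ↔ _
  simp only [compl_compl, Set.mem_range, eq_comm]

end SecondSpectrum

end

/-- If every second submodule of `M` is strongly hollow, then
`V^s(L₁ + L₂) = V^s(L₁) ∪ V^s(L₂)` for all submodules `L₁, L₂`; consequently the
sets `V^s(L)` are the closed sets of a topology on `Spec^s(M)`. -/
theorem statement13 {R M : Type*} [Ring R] [AddCommGroup M] [Module R M]
    (hsh : ∀ K : Submodule R M, IsSecondSubmodule K → StronglyHollowIn K) :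
    (∀ L₁ L₂ : Submodule R M,
        secondVariety (L₁ ⊔ L₂) = secondVariety L₁ ∪ secondVariety L₂) ∧
      ∃ t : TopologicalSpace {K : Submodule R M // IsSecondSubmodule K},
        ∀ A : Set {K : Submodule R M // IsSecondSubmodule K},
          @IsClosed _ t A ↔ ∃ L : Submodule R M, A = {K : {K : Submodule R M // IsSecondSubmodule K} | K.1 ≤ L} := by
  exact ⟨secondVariety_sup hsh, SecondSpectrum.zariskiTopology hsh,
    SecondSpectrum.isClosed_zariskiTopology_iff hsh⟩
end

section
/- If M is a comultiplication module, then every second submodule of M is strongly hollow. -/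
section Annihilator

variable {R M : Type*}

theorem isTwoSidedIdeal_annihilator [Ring R] [AddCommGroup M] [Module R M]
    (L : Submodule R M) : IsTwoSidedIdeal L.annihilator := fun r hr s =>
  Submodule.mem_annihilator.2 fun x hx => by
    rw [mul_smul]
    exact Submodule.mem_annihilator.1 hr _ (L.smul_mem s hx)

variable [Semiring R] [AddCommMonoid M] [Module R M]

theorem annihilator_mul_annihilator_le_annihilator_sup (L₁ L₂ : Submodule R M) :
    L₂.annihilator * L₁.annihilator ≤ (L₁ ⊔ L₂).annihilator :=
  Submodule.mul_le.2 fun a ha b hb => Submodule.mem_annihilator.2 fun m hm => by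
    obtain ⟨y, hy, z, hz, rfl⟩ := Submodule.mem_sup.1 hm
    rw [smul_add, mul_smul, mul_smul, Submodule.mem_annihilator.1 hb y hy, smul_zero, zero_add]
    exact Submodule.mem_annihilator.1 ha _ (L₂.smul_mem b hz)

theorem annihilator_smul_eq_bot_of_annihilator_smul_eq_self {K L₁ L₂ : Submodule R M}
    (hK : K ≤ L₁ ⊔ L₂) (h : L₁.annihilator • K = K) : L₂.annihilator • K = ⊥ :=
  eq_bot_iff.2 <| calc
    L₂.annihilator • K = (L₂.annihilator * L₁.annihilator) • K := by
      rw [Submodule.mul_smul, h]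
    _ ≤ K.annihilator • K := Submodule.smul_mono_left
      ((annihilator_mul_annihilator_le_annihilator_sup L₁ L₂).trans
        (Submodule.annihilator_mono hK))
    _ = ⊥ := Submodule.annihilator_smul K

theorem le_of_annihilator_smul_eq_bot {K L : Submodule R M}
    (hL : (L : Set M) = {m : M | ∀ r : R, (∀ x ∈ L, r • x = 0) → r • m = 0})
    (h : L.annihilator • K = ⊥) : K ≤ L := fun k hk => by
  rw [← SetLike.mem_coe, hL]
  intro r hr
  rw [← Submodule.mem_bot R, ← h]
  exact Submodule.smul_mem_smul (Submodule.mem_annihilator.2 hr) hk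

end Annihilator

/-- If `M` is a comultiplication module, then every second submodule
of `M` is strongly hollow. -/
theorem statement14 {R M : Type*} [Ring R] [AddCommGroup M] [Module R M]
    (hcomul : ∀ L : Submodule R M,
      (L : Set M) = {m : M | ∀ r : R, (∀ x ∈ L, r • x = 0) → r • m = 0}) :
    ∀ K : Submodule R M, IsSecondSubmodule K → StronglyHollowIn K := by
  rintro K ⟨hK0, hsecond⟩
  refine ⟨hK0, fun L₁ L₂ hK => ?_⟩
  rcases hsecond _ (isTwoSidedIdeal_annihilator L₁) with h | h
  · exact Or.inr <| le_of_annihilator_smul_eq_bot (hcomul L₂)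
      (annihilator_smul_eq_bot_of_annihilator_smul_eq_self hK h)
  · exact Or.inl <| le_of_annihilator_smul_eq_bot (hcomul L₁) h
end

section
/- Suppose every second submodule of M is strongly hollow and A is a nonempty subset of Spec^s(M) that is irreducible in the topology whose closed sets are the V^s(L). Then the sum H(A) = Σ_{K ∈ A} K is a second submodule of M. -/
/-! For a two-sided ideal `I`, every second `K ∈ A` lies either in `I • sSup A` (when `I • K = K`)
or in the annihilator `(0 :_M I)` (when `I • K = 0`). Irreducibility of `A` puts all of `A` on one
side, so `sSup A ≤ I • sSup A` or `I • sSup A = 0`. -/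

section SecondSubmodule

variable {R : Type*} [Ring R] {M : Type*} [AddCommGroup M] [Module R M]

lemma smul_eq_bot_iff_le_annSubmodule {I : Ideal R} (hI : IsTwoSidedIdeal I)
    {N : Submodule R M} : I • N = ⊥ ↔ N ≤ annSubmodule I hI := by
  rw [eq_bot_iff, Submodule.smul_le]
  exact ⟨fun h n hn r hr => (Submodule.mem_bot R).1 (h r hr n hn),
    fun h r hr n hn => (Submodule.mem_bot R).2 (h hn r hr)⟩

lemma IsSecondSubmodule.le_smul_or_le_annSubmodule {K : Submodule R M}
    (hK : IsSecondSubmodule K) {I : Ideal R} (hI : IsTwoSidedIdeal I) :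
    K ≤ I • K ∨ K ≤ annSubmodule I hI :=
  (hK.2 I hI).imp (fun h => h.ge) (smul_eq_bot_iff_le_annSubmodule hI).1

lemma subset_secondVariety_iff {A : Set (Submodule R M)} (hA : ∀ K ∈ A, IsSecondSubmodule K)
    {L : Submodule R M} : A ⊆ secondVariety L ↔ sSup A ≤ L :=
  ⟨fun h => sSup_le fun _ hK => (h hK).2, fun h K hK => ⟨hA K hK, (le_sSup hK).trans h⟩⟩

end SecondSubmodule

theorem statement15_general {R M : Type*} [Ring R] [AddCommGroup M] [Module R M]
    (A : Set (Submodule R M)) (hA : ∀ K ∈ A, IsSecondSubmodule K) (hne : A.Nonempty)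
    (hirr : ∀ L₁ L₂ : Submodule R M,
      A ⊆ secondVariety L₁ ∪ secondVariety L₂ →
        A ⊆ secondVariety L₁ ∨ A ⊆ secondVariety L₂) :
    IsSecondSubmodule (sSup A) := by
  obtain ⟨K₀, hK₀⟩ := hne
  refine ⟨ne_bot_of_le_ne_bot (hA K₀ hK₀).1 (le_sSup hK₀), fun I hI => ?_⟩
  have hcover : A ⊆ secondVariety (I • sSup A) ∪ secondVariety (annSubmodule I hI) :=
    fun K hK => ((hA K hK).le_smul_or_le_annSubmodule hI).imp
      (fun h => ⟨hA K hK, h.trans (smul_mono_right I (le_sSup hK))⟩)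
      (fun h => ⟨hA K hK, h⟩)
  rcases hirr _ _ hcover with h | h
  · exact Or.inl (le_antisymm Submodule.smul_le_right ((subset_secondVariety_iff hA).1 h))
  · exact Or.inr ((smul_eq_bot_iff_le_annSubmodule hI).2 ((subset_secondVariety_iff hA).1 h))

/-- Suppose every second submodule of `M` is strongly hollow and `A` is
a nonempty subset of `Spec^s(M)` that is irreducible in the topology whose closed sets
are the `V^s(L)`. Then `H(A) = Σ_{K ∈ A} K` is a second submodule of `M`. -/
theorem statement15 {R M : Type*} [Ring R] [AddCommGroup M] [Module R M]
    (hsh : ∀ K : Submodule R M, IsSecondSubmodule K → StronglyHollowIn K)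
    (A : Set (Submodule R M)) (hA : ∀ K ∈ A, IsSecondSubmodule K) (hne : A.Nonempty)
    (hirr : ∀ L₁ L₂ : Submodule R M,
      A ⊆ secondVariety L₁ ∪ secondVariety L₂ →
        A ⊆ secondVariety L₁ ∨ A ⊆ secondVariety L₂) :
    IsSecondSubmodule (sSup A) :=
  statement15_general A hA hne hirr
end

section
/- If every coprime submodule of M is strongly irreducible, then for all submodules L₁, L₂ of M, V^c(L₁ ∩ L₂) = V^c(L₁) ∪ V^c(L₂); consequently the sets V^c(L) form the closed sets of a topology on Spec^c(M). -/
theorem StronglyIrreducibleIn.infPrime {R M : Type*} [Ring R] [AddCommGroup M] [Module R M]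
    {K : Submodule R M} (hK : StronglyIrreducibleIn K) : InfPrime K :=
  ⟨not_isMax_iff_ne_top.2 hK.1, fun L₁ L₂ h => hK.2 L₁ L₂ h⟩

theorem coprimeVariety_inf {R M : Type*} [Ring R] [AddCommGroup M] [Module R M]
    (hsi : ∀ K : Submodule R M, IsCoprimeSubmodule K → StronglyIrreducibleIn K)
    (L₁ L₂ : Submodule R M) :
    coprimeVariety (L₁ ⊓ L₂) = coprimeVariety L₁ ∪ coprimeVariety L₂ := by
  ext K
  simp only [coprimeVariety, Set.mem_union, Set.mem_ofPred_eq, ← and_or_left]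
  exact and_congr_right fun hK => (hsi K hK).infPrime.inf_le

/-- The upper sets `{x | a ≤ f x}` are closed under arbitrary intersections (take `sSup`), and
under finite unions (take `⊓`) exactly because every `f x` is inf-prime; `a = ⊤` gives `∅`. -/
theorem exists_topologicalSpace_isClosed_iff_eq_setOf_le {X α : Type*} [CompleteLattice α]
    (f : X → α) (hf : ∀ x, InfPrime (f x)) :
    ∃ t : TopologicalSpace X, ∀ A : Set X, @IsClosed _ t A ↔ ∃ a : α, A = {x | a ≤ f x} := by
  let V : α → Set X := fun a => {x | a ≤ f x}
  have hV_top : V ⊤ = ∅ := Set.eq_empty_of_forall_notMem fun x hx => (hf x).ne_top (top_le_iff.1 hx)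
  have hV_sInter : ∀ S ⊆ Set.range V, ⋂₀ S = V (sSup {a | V a ∈ S}) := by
    intro S hS
    ext x
    simp only [V, Set.mem_sInter, Set.mem_ofPred_eq, sSup_le_iff]
    refine ⟨fun hx a ha => hx _ ha, fun hx A hA => ?_⟩
    obtain ⟨a, rfl⟩ := hS hA
    exact hx a hA
  have hV_inf : ∀ a b, V a ∪ V b = V (a ⊓ b) := fun a b => by
    ext x
    exact ((hf x).inf_le).symm
  let t : TopologicalSpace X := .ofClosed (Set.range V) ⟨⊤, hV_top⟩
    (fun S hS => ⟨_, (hV_sInter S hS).symm⟩)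
    (by rintro _ ⟨a, rfl⟩ _ ⟨b, rfl⟩; exact ⟨a ⊓ b, (hV_inf a b).symm⟩)
  refine ⟨t, fun A => ?_⟩
  rw [← @isOpen_compl_iff _ _ t]
  change Aᶜᶜ ∈ Set.range V ↔ _
  rw [compl_compl, Set.mem_range]
  simp only [eq_comm, V]

/-- If every coprime submodule of `M` is strongly irreducible, then
`V^c(L₁ ∩ L₂) = V^c(L₁) ∪ V^c(L₂)` for all submodules `L₁, L₂`; consequently the
sets `V^c(L)` are the closed sets of a topology on `Spec^c(M)`. -/
theorem statement17 {R M : Type*} [Ring R] [AddCommGroup M] [Module R M]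
    (hsi : ∀ K : Submodule R M, IsCoprimeSubmodule K → StronglyIrreducibleIn K) :
    (∀ L₁ L₂ : Submodule R M,
        coprimeVariety (L₁ ⊓ L₂) = coprimeVariety L₁ ∪ coprimeVariety L₂) ∧
      ∃ t : TopologicalSpace {K : Submodule R M // IsCoprimeSubmodule K},
        ∀ A : Set {K : Submodule R M // IsCoprimeSubmodule K},
          @IsClosed _ t A ↔ ∃ L : Submodule R M, A = {K : {K : Submodule R M // IsCoprimeSubmodule K} | L ≤ K.1} :=
  ⟨coprimeVariety_inf hsi,
    exists_topologicalSpace_isClosed_iff_eq_setOf_le Subtype.val fun K => (hsi K.1 K.2).infPrime⟩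
end
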